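/- arXiv:1203.4840 — 2 statements merged into one kernel-verified Lean document; each statement's English description precedes it below -/
import Mathlib

section
/- Let ψ: ℝⁿ → (−∞,+∞] be a proper convex lower semicontinuous function. Then ∂ψ_*(x,q) = inf_{x*∈∂ψ(x)} ⟨x*, q⟩ for every (x,q) ∈ Int(Dom ψ) × ℝⁿ, and also for every (x,q) ∈ ∂(Dom ψ) × ℝⁿ such that inf_{n ∈ N(x)} ⟨n,q⟩ > 0, where N(x) := {x_* ∈ ℝⁿ : |x_*| = 1 and ⟨x_*, z−x⟩ ≤ 0 for all z in the closure of Dom ψ} is the set of unit outward normals of the closure of Dom ψ at x. -/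
open scoped InnerProductSpace
open Filter Set

noncomputable section

/-- `ℝⁿ` with the Euclidean norm. -/
abbrev EV (n : ℕ) := EuclideanSpace ℝ (Fin n)

/-- Convexity of an extended-real-valued function. -/
def ConvexE {E : Type*} [AddCommGroup E] [Module ℝ E] (ψ : E → EReal) : Prop :=
  ∀ x y : E, ∀ a b : ℝ, 0 ≤ a → 0 ≤ b → a + b = 1 →
    ψ (a • x + b • y) ≤ (a : EReal) * ψ x + (b : EReal) * ψ y

/-- The subdifferential `∂ψ(x)` of a convex extended-real-valued function. -/
def subdiff {n : ℕ} (ψ : EV n → EReal) (x : EV n) : Set (EV n) :=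
  {xs | ∀ v : EV n, ((⟪xs, v - x⟫_ℝ : ℝ) : EReal) + ψ x ≤ ψ v}

/-- `∂ψ_*(x,q)`: the liminf of `⟪x*, q'⟫` as `(x',q') → (x,q)` with `x* ∈ ∂ψ(x')`. -/
def psiLower {n : ℕ} (ψ : EV n → EReal) (x q : EV n) : EReal :=
  Filter.liminf (fun p : EV n × EV n × EV n => ((⟪p.2.1, p.2.2⟫_ℝ : ℝ) : EReal))
    ((Filter.comap (fun p : EV n × EV n × EV n => (p.1, p.2.2)) (nhds (x, q))) ⊓
      Filter.principal {p : EV n × EV n × EV n | p.2.1 ∈ subdiff ψ p.1})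

/-- The set of unit outward normals to the closure of `Dom ψ` at `x`. -/
def unitNormals {n : ℕ} (D : Set (EV n)) (x : EV n) : Set (EV n) :=
  {m | ‖m‖ = 1 ∧ ∀ z ∈ closure D, ⟪m, z - x⟫_ℝ ≤ 0}


/-!
The subgradient inequality is global, so the graph of `∂ψ` is closed as soon as `ψ` is lower
semicontinuous. Take `(xₖ, qₖ) → (x, q)` and `uₖ ∈ ∂ψ(xₖ)` with
`⟪uₖ, qₖ⟫ ≤ c`. If `(uₖ)` has a bounded subsequence, a limit point `u` lies in `∂ψ(x)` and
`⟪u, q⟫ ≤ c`. Otherwise `‖uₖ‖ → ∞`, and a limit point `m` of `uₖ / ‖uₖ‖` is a unit outward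
normal of `Dom ψ` at `x` (divide `⟪uₖ, z - xₖ⟫ ≤ ψ z - ψ xₖ` by `‖uₖ‖`) with `⟪m, q⟫ ≤ 0`,
which the normal-cone condition excludes. At interior points there are no unit normals at all.
-/

open scoped Topology

section Normalize

variable {E : Type*} [NormedAddCommGroup E] [InnerProductSpace ℝ E] {uk : ℕ → E} {m : E}

lemma norm_eq_one_of_tendsto_normalize (hu : Tendsto (fun k => ‖uk k‖) atTop atTop)
    (hm : Tendsto (fun k => ‖uk k‖⁻¹ • uk k) atTop (𝓝 m)) : ‖m‖ = 1 := by
  have hunit : ∀ᶠ k in atTop, ‖‖uk k‖⁻¹ • uk k‖ = 1 := by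
    filter_upwards [hu.eventually_gt_atTop 0] with k hk
    exact norm_smul_inv_norm (norm_pos_iff.mp hk)
  exact tendsto_nhds_unique hm.norm (tendsto_const_nhds.congr' (hunit.mono fun _ h => h.symm))

lemma inner_nonpos_of_tendsto_normalize {vk : ℕ → E} {v : E} {C : ℝ}
    (hu : Tendsto (fun k => ‖uk k‖) atTop atTop)
    (hm : Tendsto (fun k => ‖uk k‖⁻¹ • uk k) atTop (𝓝 m)) (hv : Tendsto vk atTop (𝓝 v))
    (hC : ∀ᶠ k in atTop, ⟪uk k, vk k⟫_ℝ ≤ C) : ⟪m, v⟫_ℝ ≤ 0 := by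
  have hle : ∀ᶠ k in atTop, ⟪‖uk k‖⁻¹ • uk k, vk k⟫_ℝ ≤ C / ‖uk k‖ := by
    filter_upwards [hC] with k hk
    rw [real_inner_smul_left, div_eq_inv_mul]
    exact mul_le_mul_of_nonneg_left hk (inv_nonneg.mpr (norm_nonneg _))
  exact le_of_tendsto_of_tendsto (hm.inner hv) (tendsto_const_nhds.div_atTop hu) hle

end Normalize

section Subdiff

variable {n : ℕ} {ψ : EV n → EReal}

lemma isClosed_graph_subdiff (hlsc : LowerSemicontinuous ψ) :
    IsClosed {p : EV n × EV n | p.2 ∈ subdiff ψ p.1} := by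
  have hset : {p : EV n × EV n | p.2 ∈ subdiff ψ p.1} =
      ⋂ v, (fun p : EV n × EV n => ((⟪p.2, v - p.1⟫_ℝ : ℝ) : EReal) + ψ p.1) ⁻¹' Iic (ψ v) := by
    ext p; simp [subdiff]
  rw [hset]
  refine isClosed_iInter fun v => LowerSemicontinuous.isClosed_preimage ?_ (ψ v)
  have hcont : Continuous fun p : EV n × EV n => ((⟪p.2, v - p.1⟫_ℝ : ℝ) : EReal) :=
    continuous_coe_real_ereal.comp (continuous_snd.inner (continuous_const.sub continuous_fst))
  exact hcont.lowerSemicontinuous.add' (hlsc.comp continuous_fst) fun p =>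
    EReal.continuousAt_add (Or.inl (EReal.coe_ne_top _)) (Or.inl (EReal.coe_ne_bot _))

lemma mem_subdiff_of_tendsto (hlsc : LowerSemicontinuous ψ) {x u : EV n} {xk uk : ℕ → EV n}
    (hx : Tendsto xk atTop (𝓝 x)) (hu : Tendsto uk atTop (𝓝 u))
    (hsub : ∀ k, uk k ∈ subdiff ψ (xk k)) : u ∈ subdiff ψ x := by
  have hgraph : ∀ k, (xk k, uk k) ∈ {p : EV n × EV n | p.2 ∈ subdiff ψ p.1} := hsub
  have hlim : Tendsto (fun k => (xk k, uk k)) atTop (𝓝 (x, u)) := hx.prodMk_nhds hu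
  have hmem := (isClosed_graph_subdiff hlsc).mem_of_tendsto hlim (Eventually.of_forall hgraph)
  exact hmem

lemma inner_sub_le_of_mem_subdiff {x u z : EV n} {a b : ℝ} (hu : u ∈ subdiff ψ x)
    (hx : (a : EReal) < ψ x) (hz : ψ z = b) : ⟪u, z - x⟫_ℝ ≤ b - a := by
  have h := (EReal.add_lt_add_left_coe hx _).trans_le ((hu z).trans_eq hz)
  rw [← EReal.coe_add, EReal.coe_lt_coe_iff] at h
  linarith

lemma mem_unitNormals_of_tendsto (hbot : ∀ y, ψ y ≠ ⊥) (hlsc : LowerSemicontinuous ψ)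
    {x m : EV n} {xk uk : ℕ → EV n} (hx : Tendsto xk atTop (𝓝 x))
    (hu : Tendsto (fun k => ‖uk k‖) atTop atTop)
    (hm : Tendsto (fun k => ‖uk k‖⁻¹ • uk k) atTop (𝓝 m))
    (hsub : ∀ k, uk k ∈ subdiff ψ (xk k)) : m ∈ unitNormals {z | ψ z ≠ ⊤} x := by
  refine ⟨norm_eq_one_of_tendsto_normalize hu hm, fun z hz => ?_⟩
  have hclosed : IsClosed {z : EV n | ⟪m, z - x⟫_ℝ ≤ 0} :=
    isClosed_le (continuous_const.inner (continuous_id.sub continuous_const)) continuous_const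
  refine closure_minimal (fun z (hz : ψ z ≠ ⊤) => ?_) hclosed hz
  obtain ⟨a, -, ha⟩ := EReal.exists_between_coe_real (Ne.bot_lt (hbot x))
  have hbelow : ∀ᶠ k in atTop, (a : EReal) < ψ (xk k) := hx.eventually (hlsc x _ ha)
  have hψz : ψ z = ((ψ z).toReal : EReal) := (EReal.coe_toReal hz (hbot z)).symm
  refine inner_nonpos_of_tendsto_normalize (C := (ψ z).toReal - a) hu hm
    (tendsto_const_nhds.sub hx) ?_
  filter_upwards [hbelow] with k hk
  exact inner_sub_le_of_mem_subdiff (hsub k) hk hψz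

lemma exists_mem_subdiff_inner_le (hbot : ∀ y, ψ y ≠ ⊥) (hlsc : LowerSemicontinuous ψ)
    {x q : EV n} (hN : 0 < ⨅ m ∈ unitNormals {z | ψ z ≠ ⊤} x, ((⟪m, q⟫_ℝ : ℝ) : EReal))
    {c : ℝ} {xk uk qk : ℕ → EV n} (hx : Tendsto xk atTop (𝓝 x)) (hq : Tendsto qk atTop (𝓝 q))
    (hsub : ∀ k, uk k ∈ subdiff ψ (xk k)) (hc : ∀ k, ⟪uk k, qk k⟫_ℝ ≤ c) :
    ∃ u ∈ subdiff ψ x, ⟪u, q⟫_ℝ ≤ c := by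
  by_cases hub : Tendsto (fun k => ‖uk k‖) atTop atTop
  · exfalso
    have hball : ∀ k, ‖uk k‖⁻¹ • uk k ∈ Metric.closedBall (0 : EV n) 1 := fun k => by
      rw [mem_closedBall_zero_iff, norm_smul, norm_inv, norm_norm]
      exact inv_mul_le_one_of_le₀ le_rfl (norm_nonneg _)
    obtain ⟨m, -, φ, hφ, hm⟩ := (isCompact_closedBall (0 : EV n) 1).tendsto_subseq hball
    have hubφ := hub.comp hφ.tendsto_atTop
    have hmN := mem_unitNormals_of_tendsto hbot hlsc (hx.comp hφ.tendsto_atTop) hubφ hm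
      fun k => hsub (φ k)
    have hpos : (0 : ℝ) < ⟪m, q⟫_ℝ := EReal.coe_pos.mp (hN.trans_le (iInf₂_le m hmN))
    have hnonpos := inner_nonpos_of_tendsto_normalize hubφ hm (hq.comp hφ.tendsto_atTop)
      (Eventually.of_forall fun k => hc (φ k))
    linarith
  · simp only [tendsto_atTop, not_forall, not_eventually, not_le] at hub
    obtain ⟨M, hM⟩ := hub
    replace hM : ∃ᶠ k in atTop, uk k ∈ Metric.closedBall (0 : EV n) M :=
      hM.mono fun k hk => mem_closedBall_zero_iff.mpr hk.le
    obtain ⟨u, -, φ, hφ, hu⟩ := tendsto_subseq_of_frequently_bounded Metric.isBounded_closedBall hM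
    refine ⟨u, mem_subdiff_of_tendsto hlsc (hx.comp hφ.tendsto_atTop) hu fun k => hsub (φ k), ?_⟩
    exact le_of_tendsto' (hu.inner (hq.comp hφ.tendsto_atTop)) fun k => hc (φ k)

def subdiffFilter (ψ : EV n → EReal) (x q : EV n) : Filter (EV n × EV n × EV n) :=
  comap (fun p : EV n × EV n × EV n => (p.1, p.2.2)) (𝓝 (x, q)) ⊓
    𝓟 {p : EV n × EV n × EV n | p.2.1 ∈ subdiff ψ p.1}

lemma psiLower_eq_liminf (x q : EV n) :
    psiLower ψ x q =
      liminf (fun p : EV n × EV n × EV n => ((⟪p.2.1, p.2.2⟫_ℝ : ℝ) : EReal))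
        (subdiffFilter ψ x q) :=
  rfl

lemma exists_seq_of_frequently_subdiffFilter {x q : EV n} {P : EV n × EV n × EV n → Prop}
    (h : ∃ᶠ p in subdiffFilter ψ x q, P p) :
    ∃ xk uk qk : ℕ → EV n, Tendsto xk atTop (𝓝 x) ∧ Tendsto qk atTop (𝓝 q) ∧
      (∀ k, uk k ∈ subdiff ψ (xk k)) ∧ ∀ k, P (xk k, uk k, qk k) := by
  rw [subdiffFilter, frequently_inf_principal] at h
  obtain ⟨p, hp, hP⟩ := exists_seq_forall_of_frequently h
  rw [tendsto_comap_iff, nhds_prod_eq, tendsto_prod_iff'] at hp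
  exact ⟨fun k => (p k).1, fun k => (p k).2.1, fun k => (p k).2.2, hp.1, hp.2,
    fun k => (hP k).1, fun k => (hP k).2⟩

lemma psiLower_le_iInf (x q : EV n) :
    psiLower ψ x q ≤ ⨅ xs ∈ subdiff ψ x, ((⟪xs, q⟫_ℝ : ℝ) : EReal) := by
  refine le_iInf₂ fun u hu => liminf_le_of_le (by isBoundedDefault) fun b hb => ?_
  have hpure : pure (x, u, q) ≤ subdiffFilter ψ x q :=
    le_inf (map_le_iff_le_comap.mp ((map_pure _ _).trans_le (pure_le_nhds _)))
      (le_principal_iff.mpr hu)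
  exact hpure hb

lemma iInf_le_psiLower (hbot : ∀ y, ψ y ≠ ⊥) (hlsc : LowerSemicontinuous ψ) {x q : EV n}
    (hN : 0 < ⨅ m ∈ unitNormals {z | ψ z ≠ ⊤} x, ((⟪m, q⟫_ℝ : ℝ) : EReal)) :
    ⨅ xs ∈ subdiff ψ x, ((⟪xs, q⟫_ℝ : ℝ) : EReal) ≤ psiLower ψ x q := by
  rw [psiLower_eq_liminf, le_liminf_iff]
  intro b hb
  obtain ⟨c, hbc, hc⟩ := EReal.exists_between_coe_real hb
  suffices ∀ᶠ p in subdiffFilter ψ x q, c < ⟪p.2.1, p.2.2⟫_ℝ from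
    this.mono fun p hp => hbc.trans (EReal.coe_lt_coe_iff.mpr hp)
  by_contra hfreq
  simp only [not_eventually, not_lt] at hfreq
  obtain ⟨xk, uk, qk, hx, hq, hsub, hle⟩ := exists_seq_of_frequently_subdiffFilter hfreq
  obtain ⟨u, hu, huq⟩ := exists_mem_subdiff_inner_le hbot hlsc hN hx hq hsub hle
  exact (hc.trans_le (iInf₂_le u hu)).not_ge (EReal.coe_le_coe_iff.mpr huq)

end Subdiff

lemma unitNormals_eq_empty_of_mem_interior {n : ℕ} {D : Set (EV n)} {x : EV n}
    (hx : x ∈ interior D) : unitNormals D x = ∅ := by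
  refine eq_empty_iff_forall_notMem.mpr fun m ⟨hm1, hm2⟩ => ?_
  obtain ⟨ε, hε, hball⟩ := Metric.mem_nhds_iff.mp (mem_interior_iff_mem_nhds.mp hx)
  have hz : x + (ε / 2) • m ∈ Metric.ball x ε := by
    rw [Metric.mem_ball, dist_eq_norm, add_sub_cancel_left, norm_smul, Real.norm_eq_abs,
      abs_of_pos (half_pos hε), hm1]
    linarith
  have := hm2 _ (subset_closure (hball hz))
  rw [add_sub_cancel_left, real_inner_smul_right, real_inner_self_eq_norm_sq, hm1] at this
  linarith

theorem stmt_3_general {n : ℕ} (ψ : EV n → EReal)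
    (hproper : (∃ x, ψ x ≠ ⊤) ∧ ∀ x, ψ x ≠ ⊥)
    (hlsc : LowerSemicontinuous ψ)
    (D : Set (EV n)) (hD : D = {z | ψ z ≠ ⊤}) :
    (∀ x ∈ interior D, ∀ q : EV n,
      psiLower ψ x q = ⨅ xs ∈ subdiff ψ x, ((⟪xs, q⟫_ℝ : ℝ) : EReal)) ∧
    (∀ x ∈ frontier D, ∀ q : EV n,
      (0 < ⨅ m ∈ unitNormals D x, ((⟪m, q⟫_ℝ : ℝ) : EReal)) →
      psiLower ψ x q = ⨅ xs ∈ subdiff ψ x, ((⟪xs, q⟫_ℝ : ℝ) : EReal)) := by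
  subst hD
  have key : ∀ x q : EV n, 0 < ⨅ m ∈ unitNormals {z | ψ z ≠ ⊤} x, ((⟪m, q⟫_ℝ : ℝ) : EReal) →
      psiLower ψ x q = ⨅ xs ∈ subdiff ψ x, ((⟪xs, q⟫_ℝ : ℝ) : EReal) := fun x q hN =>
    le_antisymm (psiLower_le_iInf x q) (iInf_le_psiLower hproper.2 hlsc hN)
  refine ⟨fun x hx q => key x q ?_, fun x _ q => key x q⟩
  simp [unitNormals_eq_empty_of_mem_interior hx]

/-- **(Lemma 2.3 of Zălinescu.)** `∂ψ_*(x,q) = inf_{x* ∈ ∂ψ(x)} ⟪x*,q⟫` at interior points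
of `Dom ψ`, and also at boundary points `x` such that `inf_{n ∈ N(x)} ⟪n,q⟫ > 0`. -/
theorem stmt_3 {n : ℕ} (ψ : EV n → EReal)
    (hproper : (∃ x, ψ x ≠ ⊤) ∧ ∀ x, ψ x ≠ ⊥)
    (hconv : ConvexE ψ) (hlsc : LowerSemicontinuous ψ)
    (D : Set (EV n)) (hD : D = {z | ψ z ≠ ⊤}) :
    (∀ x ∈ interior D, ∀ q : EV n,
      psiLower ψ x q = ⨅ xs ∈ subdiff ψ x, ((⟪xs, q⟫_ℝ : ℝ) : EReal)) ∧
    (∀ x ∈ frontier D, ∀ q : EV n,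
      (0 < ⨅ m ∈ unitNormals D x, ((⟪m, q⟫_ℝ : ℝ) : EReal)) →
      psiLower ψ x q = ⨅ xs ∈ subdiff ψ x, ((⟪xs, q⟫_ℝ : ℝ) : EReal)) :=
  stmt_3_general ψ hproper hlsc D hD
end
end

section
/- Let Ã, C̃ > 0 and T > 0, and define η(x) = (log((|x|²+1)^{1/2}) + 1)² and χ(t,x) = exp{[C̃(T−t)+Ã]η(x)} for (t,x) ∈ [0,T]×ℝⁿ. Then η(x) ≥ 1 for all x, and for every (t,x) with C̃(T−t) ≤ Ã: (i) the spatial gradient satisfies D_xχ(t,x) = [C̃(T−t)+Ã]·χ(t,x)·(2η(x)^{1/2}/(1+|x|²))·x; (ii) |D_xχ(t,x)| ≤ 4Ã·(η(x)^{1/2}/(1+|x|²)^{1/2})·χ(t,x); (iii) the spatial Hessian satisfies ‖D²_xχ(t,x)‖ ≤ 16(Ã²+Ã)·(η(x)/(1+|x|²))·χ(t,x). -/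
open Filter Set

noncomputable section

/-- `η(x) = (log((|x|²+1)^{1/2}) + 1)²`. -/
def etaF {n : ℕ} (x : EV n) : ℝ := (Real.log (Real.sqrt (‖x‖ ^ 2 + 1)) + 1) ^ 2

/-- `χ(t,x) = exp{[C̃(T−t)+Ã]η(x)}`. -/
def chiF {n : ℕ} (Ctil Atil T : ℝ) (t : ℝ) (x : EV n) : ℝ :=
  Real.exp ((Ctil * (T - t) + Atil) * etaF x)

/-!
`χ(t,·)` is radial: `χ(t,x) = g(|x|²)` with `g(r) = exp(a w(r)²)`, `w(r) = log(1+r)/2 + 1 = √η`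
and `a = C̃(T−t)+Ã ∈ [0, 2Ã]`. Hence `D_xχ = 2g'(|x|²) x` and
`D²_xχ = 2g'(|x|²) I + 4g''(|x|²) x ⊗ x`, so `‖D²_xχ‖ ≤ 2|g'| + 4|g''| |x|²`.
The explicit formulas for `g'` and `g''`, together with `w ≥ 1`, `|x| ≤ (1+|x|²)^{1/2}` and
`a ≤ 2Ã`, give the bounds.
-/

section Radial

open ContinuousLinearMap

variable {E : Type*} [NormedAddCommGroup E] [InnerProductSpace ℝ E] {g : ℝ → ℝ} {g' : ℝ} {x : E}

theorem hasFDerivAt_comp_norm_sq (hg : HasDerivAt g g' (‖x‖ ^ 2)) :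
    HasFDerivAt (fun y => g (‖y‖ ^ 2)) ((2 * g') • innerSL ℝ x) x :=
  (hg.comp_hasFDerivAt x (hasStrictFDerivAt_norm_sq x).hasFDerivAt).congr_fderiv <| by
    rw [two_smul, ← two_smul ℝ, smul_smul, mul_comm]

theorem hasGradientAt_comp_norm_sq [CompleteSpace E] (hg : HasDerivAt g g' (‖x‖ ^ 2)) :
    HasGradientAt (fun y => g (‖y‖ ^ 2)) ((2 * g') • x) x := by
  rw [hasGradientAt_iff_hasFDerivAt, map_smul]
  exact hasFDerivAt_comp_norm_sq hg

theorem hasFDerivAt_smul_self_comp_norm_sq (hg : HasDerivAt g g' (‖x‖ ^ 2)) :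
    HasFDerivAt (fun y => g (‖y‖ ^ 2) • y)
      (g (‖x‖ ^ 2) • ContinuousLinearMap.id ℝ E + ((2 * g') • innerSL ℝ x).smulRight x) x :=
  (hasFDerivAt_comp_norm_sq hg).smul (hasFDerivAt_id x)

theorem norm_smul_id_add_smulRight_innerSL_le (c d : ℝ) (x : E) :
    ‖c • ContinuousLinearMap.id ℝ E + (d • innerSL ℝ x).smulRight x‖ ≤ |c| + |d| * ‖x‖ ^ 2 := by
  refine (norm_add_le _ _).trans (add_le_add ?_ ?_)
  · rw [← Real.norm_eq_abs]
    exact (opNorm_smul_le c _).trans (mul_le_of_le_one_right (norm_nonneg c) norm_id_le)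
  · rw [norm_smulRight_apply, norm_smul, innerSL_apply_norm, Real.norm_eq_abs, mul_assoc, sq]

end Radial

theorem div_one_add_sq_le_one_div_sqrt (t : ℝ) :
    t / (1 + t ^ 2) ≤ 1 / √(1 + t ^ 2) :=
  calc t / (1 + t ^ 2) ≤ √(1 + t ^ 2) / (1 + t ^ 2) := by
        gcongr
        exact Real.le_sqrt_of_sq_le (by linarith)
    _ = 1 / √(1 + t ^ 2) := Real.sqrt_div_self'

/-- `logWeight ‖x‖² = √η(x)`, so `chiProfile (C̃(T−t)+Ã) ‖x‖² = χ(t,x)`. -/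
def logWeight (r : ℝ) : ℝ := Real.log (1 + r) / 2 + 1

def chiProfile (a r : ℝ) : ℝ := Real.exp (a * logWeight r ^ 2)

def chiGradCoeff (a r : ℝ) : ℝ := a * chiProfile a r * (2 * logWeight r / (1 + r))

def chiGradCoeffDeriv (a r : ℝ) : ℝ :=
  2 * a * chiProfile a r * (a * logWeight r ^ 2 - logWeight r + 1 / 2) / (1 + r) ^ 2

theorem one_le_logWeight {r : ℝ} (hr : 0 ≤ r) : 1 ≤ logWeight r := by
  have : 0 ≤ Real.log (1 + r) := Real.log_nonneg (by linarith)
  unfold logWeight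
  linarith

theorem etaF_eq_logWeight_sq {n : ℕ} (x : EV n) : etaF x = logWeight (‖x‖ ^ 2) ^ 2 := by
  rw [etaF, logWeight, Real.log_sqrt (by positivity), add_comm (‖x‖ ^ 2)]

theorem sqrt_etaF {n : ℕ} (x : EV n) : √(etaF x) = logWeight (‖x‖ ^ 2) := by
  rw [etaF_eq_logWeight_sq, Real.sqrt_sq (by linarith [one_le_logWeight (sq_nonneg ‖x‖)])]

theorem one_le_etaF {n : ℕ} (x : EV n) : 1 ≤ etaF x := by
  rw [etaF_eq_logWeight_sq]
  exact one_le_pow₀ (one_le_logWeight (sq_nonneg ‖x‖))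

theorem chiF_eq_chiProfile {n : ℕ} (Ctil Atil T t : ℝ) (x : EV n) :
    chiF Ctil Atil T t x = chiProfile (Ctil * (T - t) + Atil) (‖x‖ ^ 2) := by
  rw [chiF, chiProfile, etaF_eq_logWeight_sq]

section Profile

variable {A a r : ℝ}

theorem hasDerivAt_logWeight (hr : -1 < r) : HasDerivAt logWeight (1 / (2 * (1 + r))) r := by
  have hr' : 1 + r ≠ 0 := by linarith
  have h := (((hasDerivAt_id r).const_add 1).log hr').div_const 2 |>.add_const 1
  exact h.congr_deriv (by simp only [id]; field_simp)

theorem hasDerivAt_chiProfile (hr : -1 < r) :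
    HasDerivAt (chiProfile a) (chiGradCoeff a r / 2) r := by
  refine (((hasDerivAt_logWeight hr).pow 2).const_mul a).exp.congr_deriv ?_
  have : 1 + r ≠ 0 := by linarith
  simp only [chiGradCoeff, chiProfile, Pi.pow_apply]
  field_simp
  ring

theorem hasDerivAt_chiGradCoeff (hr : -1 < r) :
    HasDerivAt (chiGradCoeff a) (chiGradCoeffDeriv a r) r := by
  have hr' : 1 + r ≠ 0 := by linarith
  refine (((hasDerivAt_chiProfile hr).const_mul a).mul
    (((hasDerivAt_logWeight hr).const_mul 2).div ((hasDerivAt_id r).const_add 1) hr')).congr_deriv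
      ?_
  simp only [chiGradCoeff, chiGradCoeffDeriv, id, Pi.div_apply]
  field_simp
  ring

theorem chiGradCoeff_nonneg (ha : 0 ≤ a) (hr : 0 ≤ r) : 0 ≤ chiGradCoeff a r := by
  have := one_le_logWeight hr
  unfold chiGradCoeff chiProfile
  positivity

theorem chiGradCoeff_mul_le (ha : 0 ≤ a) (haA : a ≤ 2 * A) {t : ℝ} (ht : 0 ≤ t) :
    chiGradCoeff a (t ^ 2) * t
      ≤ 4 * A * (logWeight (t ^ 2) / √(1 + t ^ 2)) * chiProfile a (t ^ 2) := by
  have hP := one_le_logWeight (sq_nonneg t)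
  have hE : 0 < chiProfile a (t ^ 2) := Real.exp_pos _
  calc chiGradCoeff a (t ^ 2) * t
      = 2 * a * (logWeight (t ^ 2) * chiProfile a (t ^ 2)) * (t / (1 + t ^ 2)) := by
        unfold chiGradCoeff; ring
    _ ≤ 2 * (2 * A) * (logWeight (t ^ 2) * chiProfile a (t ^ 2)) * (1 / √(1 + t ^ 2)) :=
        mul_le_mul (by gcongr) (div_one_add_sq_le_one_div_sqrt t) (by positivity)
          (by have := ha.trans haA; positivity)
    _ = _ := by ring

theorem abs_chiGradCoeff_add_abs_deriv_mul_le (ha : 0 ≤ a) (haA : a ≤ 2 * A) (hr : 0 ≤ r) :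
    |chiGradCoeff a r| + |2 * chiGradCoeffDeriv a r| * r
      ≤ 16 * (A ^ 2 + A) * (logWeight r ^ 2 / (1 + r)) * chiProfile a r := by
  rw [abs_of_nonneg (chiGradCoeff_nonneg ha hr), chiGradCoeff, chiGradCoeffDeriv]
  have hP : 1 ≤ logWeight r := one_le_logWeight hr
  have hE : 0 < chiProfile a r := Real.exp_pos _
  generalize logWeight r = P at hP ⊢
  generalize chiProfile a r = E at hE ⊢
  have hs : 0 < 1 + r := by linarith
  have hq : |a * P ^ 2 - P + 1 / 2| ≤ (a + 1) * P ^ 2 := abs_le.2 ⟨by nlinarith, by nlinarith⟩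
  calc a * E * (2 * P / (1 + r)) + |2 * (2 * a * E * (a * P ^ 2 - P + 1 / 2) / (1 + r) ^ 2)| * r
      = (2 * a * P * E + 4 * a * E * |a * P ^ 2 - P + 1 / 2| * (r / (1 + r))) / (1 + r) := by
        rw [show 2 * (2 * a * E * (a * P ^ 2 - P + 1 / 2) / (1 + r) ^ 2)
            = 4 * a * E / (1 + r) ^ 2 * (a * P ^ 2 - P + 1 / 2) by ring,
          abs_mul, abs_of_nonneg (by positivity)]
        field_simp
    _ ≤ (2 * a * P ^ 2 * E + 4 * a * E * ((a + 1) * P ^ 2) * 1) / (1 + r) := by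
        gcongr
        · nlinarith
        · rw [div_le_one hs]; linarith
    _ ≤ 16 * (A ^ 2 + A) * (P ^ 2 / (1 + r)) * E := by
        rw [mul_div_assoc', div_mul_eq_mul_div]
        gcongr
        have key : 2 * a + 4 * a * (a + 1) ≤ 16 * (A ^ 2 + A) := by nlinarith
        nlinarith [mul_le_mul_of_nonneg_right key (by positivity : 0 ≤ P ^ 2 * E)]

end Profile

theorem hasGradientAt_chiProfile_norm_sq {E : Type*} [NormedAddCommGroup E] [InnerProductSpace ℝ E]
    [CompleteSpace E] (a : ℝ) (x : E) :
    HasGradientAt (fun y => chiProfile a (‖y‖ ^ 2)) (chiGradCoeff a (‖x‖ ^ 2) • x) x := by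
  have h := hasGradientAt_comp_norm_sq
    (hasDerivAt_chiProfile (a := a) (neg_one_lt_zero.trans_le (sq_nonneg ‖x‖)))
  rwa [mul_div_cancel₀ _ two_ne_zero] at h

theorem hasFDerivAt_gradient_chiProfile_norm_sq {E : Type*} [NormedAddCommGroup E]
    [InnerProductSpace ℝ E] [CompleteSpace E] (a : ℝ) (x : E) :
    HasFDerivAt (gradient fun y => chiProfile a (‖y‖ ^ 2))
      (chiGradCoeff a (‖x‖ ^ 2) • ContinuousLinearMap.id ℝ E +
        ((2 * chiGradCoeffDeriv a (‖x‖ ^ 2)) • innerSL ℝ x).smulRight x) x := by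
  rw [show (gradient fun y : E => chiProfile a (‖y‖ ^ 2)) = fun y => chiGradCoeff a (‖y‖ ^ 2) • y
    from funext fun y => (hasGradientAt_chiProfile_norm_sq a y).gradient]
  exact hasFDerivAt_smul_self_comp_norm_sq
    (hasDerivAt_chiGradCoeff (neg_one_lt_zero.trans_le (sq_nonneg ‖x‖)))

theorem stmt_15_general {n : ℕ} (Atil Ctil T : ℝ) :
    (∀ x : EV n, 1 ≤ etaF x) ∧
    (∀ (t : ℝ) (x : EV n), 0 ≤ Ctil * (T - t) → Ctil * (T - t) ≤ Atil →
      (gradient (fun y : EV n => chiF Ctil Atil T t y) x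
          = ((Ctil * (T - t) + Atil) * chiF Ctil Atil T t x
              * (2 * Real.sqrt (etaF x) / (1 + ‖x‖ ^ 2))) • x) ∧
      ‖gradient (fun y : EV n => chiF Ctil Atil T t y) x‖
          ≤ 4 * Atil * (Real.sqrt (etaF x) / Real.sqrt (1 + ‖x‖ ^ 2))
              * chiF Ctil Atil T t x ∧
      ‖fderiv ℝ (fun y : EV n => gradient (fun z : EV n => chiF Ctil Atil T t z) y) x‖
          ≤ 16 * (Atil ^ 2 + Atil) * (etaF x / (1 + ‖x‖ ^ 2)) * chiF Ctil Atil T t x) := by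
  refine ⟨one_le_etaF, fun t x hC hCA => ?_⟩
  set a := Ctil * (T - t) + Atil
  have ha : 0 ≤ a := by linarith
  have haA : a ≤ 2 * Atil := by linarith
  have hchi : (fun y : EV n => chiF Ctil Atil T t y) = fun y => chiProfile a (‖y‖ ^ 2) :=
    funext fun y => chiF_eq_chiProfile Ctil Atil T t y
  rw [hchi, (hasGradientAt_chiProfile_norm_sq a x).gradient, chiF_eq_chiProfile, sqrt_etaF,
    etaF_eq_logWeight_sq]
  refine ⟨rfl, ?_, ?_⟩
  · rw [norm_smul, Real.norm_of_nonneg (chiGradCoeff_nonneg ha (sq_nonneg _))]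
    exact chiGradCoeff_mul_le ha haA (norm_nonneg x)
  · rw [(hasFDerivAt_gradient_chiProfile_norm_sq a x).fderiv]
    exact (norm_smul_id_add_smulRight_innerSL_le _ _ x).trans
      (abs_chiGradCoeff_add_abs_deriv_mul_le ha haA (sq_nonneg _))

/-- **(Derivative estimates for the barrier `χ`.)** `η ≥ 1` everywhere, and whenever
`0 ≤ C̃(T−t) ≤ Ã`: (i) `D_xχ = [C̃(T−t)+Ã]χ (2η^{1/2}/(1+|x|²)) x`;
(ii) `|D_xχ| ≤ 4Ã (η^{1/2}/(1+|x|²)^{1/2}) χ`;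
(iii) the operator norm of the Hessian satisfies `‖D²_xχ‖ ≤ 16(Ã²+Ã) (η/(1+|x|²)) χ`. -/
theorem stmt_15 {n : ℕ} (Atil Ctil T : ℝ) (hA : 0 < Atil) (hC : 0 < Ctil) (hT : 0 < T) :
    (∀ x : EV n, 1 ≤ etaF x) ∧
    (∀ (t : ℝ) (x : EV n), 0 ≤ Ctil * (T - t) → Ctil * (T - t) ≤ Atil →
      (gradient (fun y : EV n => chiF Ctil Atil T t y) x
          = ((Ctil * (T - t) + Atil) * chiF Ctil Atil T t x
              * (2 * Real.sqrt (etaF x) / (1 + ‖x‖ ^ 2))) • x) ∧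
      ‖gradient (fun y : EV n => chiF Ctil Atil T t y) x‖
          ≤ 4 * Atil * (Real.sqrt (etaF x) / Real.sqrt (1 + ‖x‖ ^ 2))
              * chiF Ctil Atil T t x ∧
      ‖fderiv ℝ (fun y : EV n => gradient (fun z : EV n => chiF Ctil Atil T t z) y) x‖
          ≤ 16 * (Atil ^ 2 + Atil) * (etaF x / (1 + ‖x‖ ^ 2)) * chiF Ctil Atil T t x) :=
  stmt_15_general Atil Ctil T
end
end
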